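/- arXiv:2008.12183 — 2 statements merged into one kernel-verified Lean document; each statement's English description precedes it below -/
import Mathlib

section
/- Let p be an odd prime and n a positive integer, and regard F_{p^n} as the subfield of F_{p^{2n}} consisting of elements fixed by x ↦ x^{p^n}. Then: (i) every x ∈ F_{p^n} can be written as x = η + η^{−1} for some nonzero η ∈ F_{p^{2n}}; and (ii) every nonzero η ∈ F_{p^{2n}} with η + η^{−1} ∈ F_{p^n} satisfies η ∈ F_{p^n} or η^{p^n+1} = 1. -/
/-- Preliminary observation (Section 2): working in `E = F_{p^{2n}}`, with
`F_{p^n}` regarded as the subfield of elements fixed by `x ↦ x^{p^n}`: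
(i) every `x` fixed by `x ↦ x^{p^n}` can be written `x = η + η⁻¹` for some
nonzero `η ∈ E`; (ii) every nonzero `η ∈ E` with `η + η⁻¹` fixed by
`x ↦ x^{p^n}` satisfies `η^{p^n} = η` or `η^{p^n + 1} = 1`. -/
theorem stmt_17 (p n : ℕ) (hp : p.Prime) (hodd : Odd p) (hn0 : 0 < n)
    (E : Type*) [Field E] [Fintype E] (hcard : Fintype.card E = p ^ (2 * n)) :
    (∀ x : E, x ^ (p ^ n) = x → ∃ η : E, η ≠ 0 ∧ x = η + η⁻¹) ∧
      (∀ η : E, η ≠ 0 → (η + η⁻¹) ^ (p ^ n) = η + η⁻¹ →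
        η ^ (p ^ n) = η ∨ η ^ (p ^ n + 1) = 1) := by
  -- characteristic p
  have hchar : CharP E p := by
    set r := ringChar E with hr
    haveI hrc : CharP E r := ringChar.charP E
    have hrp : r.Prime := CharP.char_is_prime E r
    obtain ⟨m, _, hcm⟩ := FiniteField.card E r
    have hdvd : p ∣ r ^ (m : ℕ) := by
      rw [← hcm, hcard]; exact dvd_pow_self p (by omega)
    have : p = r := (Nat.prime_dvd_prime_iff_eq hp hrp).mp (hp.prime.dvd_of_dvd_pow hdvd)
    exact this ▸ hrc
  haveI := Fact.mk hp
  have hpne2 : p ≠ 2 := by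
    rintro rfl
    exact (by decide : ¬ Odd 2) hodd
  have hp2 : (2 : E) ≠ 0 := by
    intro h
    have hd : p ∣ 2 := (CharP.cast_eq_zero_iff E p 2).mp (by exact_mod_cast h)
    exact hpne2 ((Nat.prime_dvd_prime_iff_eq hp Nat.prime_two).mp hd)
  have hp4 : (4 : E) ≠ 0 := by
    have h42 : (4 : E) = 2 * 2 := by norm_num
    rw [h42]; exact mul_ne_zero hp2 hp2
  have hrc2 : ringChar E ≠ 2 := by
    rw [ringChar.eq E p]; exact hpne2
  -- every fixed element is a square in E
  have hsq : ∀ a : E, a ^ (p ^ n) = a → IsSquare a := by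
    intro a ha
    rcases eq_or_ne a 0 with rfl | ha0
    · exact ⟨0, by ring⟩
    rw [FiniteField.isSquare_iff hrc2 ha0]
    have hq1 : a ^ (p ^ n - 1) = 1 := by
      have hpn : 1 ≤ p ^ n := Nat.one_le_pow _ _ hp.pos
      have h1 : a ^ (p ^ n - 1) * a = a := by
        rw [← pow_succ]
        have h2 : p ^ n - 1 + 1 = p ^ n := by omega
        rw [h2, ha]
      field_simp at h1
      exact h1
    obtain ⟨k, hk⟩ := hodd.pow (n := n)
    have hdiv : Fintype.card E / 2 = (p ^ n - 1) * ((p ^ n + 1) / 2) := by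
      rw [hcard]
      have h2 : p ^ (2 * n) = p ^ n * p ^ n := by rw [two_mul, pow_add]
      rw [h2, hk]
      have hm : (2 * k + 1) * (2 * k + 1) = 4 * (k * k) + 4 * k + 1 := by ring
      have hm2 : (2 * k + 1 - 1) * ((2 * k + 1 + 1) / 2) = 2 * (k * k) + 2 * k := by
        have e1 : 2 * k + 1 - 1 = 2 * k := by omega
        have e2 : (2 * k + 1 + 1) / 2 = k + 1 := by omega
        rw [e1, e2]; ring
      omega
    rw [hdiv, pow_mul, hq1, one_pow]
  have h2fix : (2 : E) ^ (p ^ n) = 2 := by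
    have : ((1 : E) + 1) ^ (p ^ n) = 1 + 1 := by
      rw [add_pow_char_pow, one_pow]
    simpa [one_add_one_eq_two] using this
  refine ⟨?_, ?_⟩
  · intro x hx
    have hx2 : (x ^ 2 - 4) ^ (p ^ n) = x ^ 2 - 4 := by
      have h4 : (4 : E) ^ (p ^ n) = 4 := by
        have h42 : (4 : E) = 2 ^ 2 := by norm_num
        rw [h42, ← pow_mul, mul_comm, pow_mul, h2fix]
      rw [sub_pow_char_pow, ← pow_mul, mul_comm 2 (p ^ n), pow_mul, hx, h4]
    obtain ⟨s, hs⟩ := hsq _ hx2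
    set η : E := (x + s) / 2 with hη
    have h2η : 2 * η = x + s := by
      rw [hη]; field_simp
    have key : η * η - x * η + 1 = 0 := by
      apply mul_left_cancel₀ hp4
      linear_combination (2 * η - x + s) * h2η - hs
    have hη0 : η ≠ 0 := by
      intro h
      rw [h] at key
      simp at key
    have hinv : η⁻¹ = x - η := by
      have hm : η * (x - η) = 1 := by linear_combination -key
      exact inv_eq_of_mul_eq_one_right hm
    exact ⟨η, hη0, by rw [hinv]; ring⟩
  · intro η hη hfix
    have hσ0 : η ^ (p ^ n) ≠ 0 := pow_ne_zero _ hη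
    have hfr : η ^ (p ^ n) + (η ^ (p ^ n))⁻¹ = η + η⁻¹ := by
      rw [← inv_pow, ← add_pow_char_pow, hfix]
    set σ : E := η ^ (p ^ n) with hσ
    have hfac : (σ - η) * (σ - η⁻¹) = 0 := by
      have h1 : σ * σ - (η + η⁻¹) * σ + 1 = 0 := by
        rw [← hfr]
        have hc := inv_mul_cancel₀ hσ0
        linear_combination -hc
      calc (σ - η) * (σ - η⁻¹) = σ * σ - (η + η⁻¹) * σ + η * η⁻¹ := by ring
        _ = 0 := by rw [mul_inv_cancel₀ hη]; exact h1
    rcases mul_eq_zero.mp hfac with h | h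
    · left; linear_combination h
    · right
      have hσinv : σ = η⁻¹ := by linear_combination h
      rw [pow_succ, ← hσ, hσinv, inv_mul_cancel₀ hη]
end

section
/- Let d be an odd positive integer and let n, k be positive integers with gcd(2n,k)=1 and ((5^k+1)/2)·d ≡ (5^n+1)/2 (mod 5^n−1). Then gcd((5^k+1)/2, 5^n−1) = 1, gcd(d, 5^n−1) = 1, and there exists an odd positive integer l such that (5^k+1)·d = l·(5^n−1) + 2. -/
/-- Number-theoretic facts used in the proof of Theorem 3.2: for odd positive
`d` and positive `n, k` with `gcd(2n,k) = 1` and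
`((5^k+1)/2)·d ≡ (5^n+1)/2 (mod 5^n-1)`, one has `gcd((5^k+1)/2, 5^n-1) = 1`,
`gcd(d, 5^n-1) = 1`, and `(5^k+1)·d = l·(5^n-1) + 2` for some odd positive
integer `l`. -/
theorem stmt_19 (n k d : ℕ) (hn0 : 0 < n) (hk0 : 0 < k) (hd0 : 0 < d)
    (hd : Odd d) (hgcd : Nat.gcd (2 * n) k = 1)
    (hcong : ((5 ^ k + 1) / 2) * d ≡ (5 ^ n + 1) / 2 [MOD 5 ^ n - 1]) :
    Nat.gcd ((5 ^ k + 1) / 2) (5 ^ n - 1) = 1 ∧ Nat.gcd d (5 ^ n - 1) = 1 ∧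
      ∃ l : ℕ, 0 < l ∧ Odd l ∧ (5 ^ k + 1) * d = l * (5 ^ n - 1) + 2 := by
  have hk4 : 5 ^ k % 4 = 1 := by rw [Nat.pow_mod]; simp
  have hn4 : 5 ^ n % 4 = 1 := by rw [Nat.pow_mod]; simp
  have hk5 : 5 ≤ 5 ^ k := by
    calc (5:ℕ) = 5 ^ 1 := by norm_num
    _ ≤ 5 ^ k := Nat.pow_le_pow_right (by norm_num) hk0
  have hn5 : 5 ≤ 5 ^ n := by
    calc (5:ℕ) = 5 ^ 1 := by norm_num
    _ ≤ 5 ^ n := Nat.pow_le_pow_right (by norm_num) hn0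
  obtain ⟨a, ha⟩ : ∃ a, 5 ^ k = 4 * a + 1 := ⟨5 ^ k / 4, by omega⟩
  obtain ⟨c, hc⟩ : ∃ c, 5 ^ n = 4 * c + 1 := ⟨5 ^ n / 4, by omega⟩
  have ha1 : 1 ≤ a := by omega
  have hc1 : 1 ≤ c := by omega
  have hA : (5 ^ k + 1) / 2 = 2 * a + 1 := by omega
  have hB : (5 ^ n + 1) / 2 = 2 * c + 1 := by omega
  have hM : 5 ^ n - 1 = 4 * c := by omega
  rw [hA, hB, hM] at hcong
  obtain ⟨t, ht⟩ : ∃ t : ℤ, (2*c+1 : ℤ) - (2*a+1)*d = 4*c*t := by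
    have h := hcong.dvd
    push_cast at h
    exact h
  -- key lemma: an odd divisor of 4c that divides 2c+1 (in ℤ) is 1
  have key : ∀ g : ℕ, g ∣ 4 * c → (g:ℤ) ∣ (2*(c:ℤ)+1) → ¬ (2 ∣ g) → g = 1 := by
    intro g h1 h2 hodd
    have h1' : (g:ℤ) ∣ 4 * (c:ℤ) := by exact_mod_cast Int.natCast_dvd_natCast.mpr h1
    have h3 : (g:ℤ) ∣ 2 := by
      have := dvd_sub (h2.mul_left 2) h1'
      have e : 2*(2*(c:ℤ)+1) - 4*c = 2 := by ring
      rwa [e] at this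
    have h4 : g ∣ 2 := by exact_mod_cast h3
    have := Nat.le_of_dvd (by norm_num) h4
    interval_cases g <;> omega
  have goal1 : Nat.gcd ((5 ^ k + 1) / 2) (5 ^ n - 1) = 1 := by
    rw [hA, hM]
    set g := Nat.gcd (2*a+1) (4*c) with hg
    have hga : g ∣ 2*a+1 := Nat.gcd_dvd_left _ _
    have hgc : g ∣ 4*c := Nat.gcd_dvd_right _ _
    have hodd : ¬ (2 ∣ g) := by
      intro h
      obtain ⟨q, hq⟩ := h.trans hga
      omega
    refine key g hgc ?_ hodd
    have h1 : (g:ℤ) ∣ (2*(a:ℤ)+1) * d := by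
      exact Dvd.dvd.mul_right (by exact_mod_cast Int.natCast_dvd_natCast.mpr hga) _
    have h2 : (g:ℤ) ∣ 4*(c:ℤ)*t :=
      Dvd.dvd.mul_right (by exact_mod_cast Int.natCast_dvd_natCast.mpr hgc) _
    have : (g:ℤ) ∣ (2*(a:ℤ)+1)*d + 4*c*t := dvd_add h1 h2
    have e : (2*(a:ℤ)+1)*d + 4*c*t = 2*c+1 := by linarith [ht]
    rwa [e] at this
  have goal2 : Nat.gcd d (5 ^ n - 1) = 1 := by
    rw [hM]
    set g := Nat.gcd d (4*c) with hg
    have hga : g ∣ d := Nat.gcd_dvd_left _ _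
    have hgc : g ∣ 4*c := Nat.gcd_dvd_right _ _
    have hodd : ¬ (2 ∣ g) := by
      intro h
      obtain ⟨r, hr⟩ := hd
      obtain ⟨q, hq⟩ := h.trans hga
      omega
    refine key g hgc ?_ hodd
    have h1 : (g:ℤ) ∣ (2*(a:ℤ)+1) * d := by
      exact Dvd.dvd.mul_left (by exact_mod_cast Int.natCast_dvd_natCast.mpr hga) _
    have h2 : (g:ℤ) ∣ 4*(c:ℤ)*t :=
      Dvd.dvd.mul_right (by exact_mod_cast Int.natCast_dvd_natCast.mpr hgc) _
    have : (g:ℤ) ∣ (2*(a:ℤ)+1)*d + 4*c*t := dvd_add h1 h2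
    have e : (2*(a:ℤ)+1)*d + 4*c*t = 2*c+1 := by linarith [ht]
    rwa [e] at this
  refine ⟨goal1, goal2, ?_⟩
  have htle : t ≤ 0 := by
    by_contra h
    push_neg at h
    have h1 : (1:ℤ) ≤ t := h
    have hd1 : (1:ℤ) ≤ (d:ℤ) := by exact_mod_cast hd0
    have ha1' : (1:ℤ) ≤ (a:ℤ) := by exact_mod_cast ha1
    have hc1' : (1:ℤ) ≤ (c:ℤ) := by exact_mod_cast hc1
    nlinarith [mul_le_mul_of_nonneg_left h1 (by linarith : (0:ℤ) ≤ 4*(c:ℤ)),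
      mul_le_mul_of_nonneg_left hd1 (by linarith : (0:ℤ) ≤ 2*(a:ℤ)+1)]
  refine ⟨2 * (-t).toNat + 1, by omega, ⟨(-t).toNat, by ring⟩, ?_⟩
  rw [hM, ha]
  have hts : ((-t).toNat : ℤ) = -t := Int.toNat_of_nonneg (by omega)
  zify
  rw [hts]
  linarith [ht]
end
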